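/- arXiv:2407.01174 — 3 statements merged into one kernel-verified Lean document; each statement's English description precedes it below -/
import Mathlib

section
/- For every natural number n, there exists a set P of n points in ℝ² such that at least ⌊n/4⌋ distinct positive real numbers d each occur as the distance ‖p - q‖ for at least n + 1 unordered pairs {p, q} of distinct points of P. -/
/-- The point (x, y) in the Euclidean plane. -/
noncomputable def pt (x y : ℝ) : EuclideanSpace ℝ (Fin 2) :=
  (WithLp.equiv 2 (Fin 2 → ℝ)).symm ![x, y]

/-- Vertex `j` of the regular `N`-gon with center `c`, radius `r`, phase `φ`. -/
noncomputable def vtx (c : EuclideanSpace ℝ (Fin 2)) (r φ : ℝ) (N j : ℕ) :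
    EuclideanSpace ℝ (Fin 2) :=
  c + pt (r * Real.cos (2 * Real.pi * j / N + φ)) (r * Real.sin (2 * Real.pi * j / N + φ))

/-- The distance `d` occurs at least `t` times (as unordered pairs) in the point set `P`:
there are at least `2 * t` ordered pairs of distinct points of `P` at distance `d`. -/
def occursAtLeast (P : Set (EuclideanSpace ℝ (Fin 2))) (d : ℝ) (t : ℕ) : Prop :=
  2 * t ≤ {pq : EuclideanSpace ℝ (Fin 2) × EuclideanSpace ℝ (Fin 2) |
      pq.1 ∈ P ∧ pq.2 ∈ P ∧ pq.1 ≠ pq.2 ∧ dist pq.1 pq.2 = d}.ncard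

/-- Rotation of the plane by angle `θ` about the point `a`. -/
noncomputable def rotAbout (a : EuclideanSpace ℝ (Fin 2)) (θ : ℝ)
    (p : EuclideanSpace ℝ (Fin 2)) : EuclideanSpace ℝ (Fin 2) :=
  a + pt (Real.cos θ * (p - a) 0 - Real.sin θ * (p - a) 1)
         (Real.sin θ * (p - a) 0 + Real.cos θ * (p - a) 1)

/- Let `ζ = exp (2πi/N)`, `A` the `N`-th roots of unity and `B = 1 + a - A` its point reflection,
for an `N`-th root of unity `a ≠ -1`. `A` and `B` lie on distinct unit circles, which meet in at
most two points, so `A ∩ B = {1, a}` and `|A ∪ B| = 2N - |{1, a}|`. Each chord length `|1 - ζ ^ k|`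
with `0 < 2k < N` is realised by `N` unordered pairs in `A` and `N` in `B`, of which at most
`|{1, a}| - 1` lie in `A ∩ B`. Taking `a = 1` for odd `n` and `a = ζ` for even `n` gives `n` points
in which each of `⌊(N - 1)/2⌋ ≥ ⌊n/4⌋` distances occurs at least `n + 1` times. -/

open Complex Polynomial Finset Real ComplexConjugate

section PairsAtDist

variable {α : Type*} [PseudoMetricSpace α]

def pairsAtDist (P : Set α) (d : ℝ) : Set (α × α) :=
  {pq | pq.1 ∈ P ∧ pq.2 ∈ P ∧ pq.1 ≠ pq.2 ∧ dist pq.1 pq.2 = d}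

variable {P A B : Set α} {d : ℝ}

lemma pairsAtDist_mono (h : A ⊆ B) : pairsAtDist A d ⊆ pairsAtDist B d :=
  fun _ ⟨h₁, h₂, hne, hd⟩ => ⟨h h₁, h h₂, hne, hd⟩

lemma Set.Finite.pairsAtDist (hP : P.Finite) : (pairsAtDist P d).Finite :=
  (hP.prod hP).subset fun _ h => ⟨h.1, h.2.1⟩

lemma pairsAtDist_inter_subset_offDiag : pairsAtDist A d ∩ pairsAtDist B d ⊆ (A ∩ B).offDiag :=
  fun _ ⟨⟨hA₁, hA₂, hne, _⟩, hB₁, hB₂, _⟩ => ⟨⟨hA₁, hB₁⟩, ⟨hA₂, hB₂⟩, hne⟩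

lemma ncard_pairsAtDist_add_le (hA : A.Finite) (hB : B.Finite) :
    (pairsAtDist A d).ncard + (pairsAtDist B d).ncard ≤
      (pairsAtDist (A ∪ B) d).ncard + (A ∩ B).offDiag.ncard := by
  rw [← Set.ncard_union_add_ncard_inter _ _ hA.pairsAtDist hB.pairsAtDist]
  gcongr
  · exact (hA.union hB).pairsAtDist
  · exact Set.union_subset (pairsAtDist_mono Set.subset_union_left)
      (pairsAtDist_mono Set.subset_union_right)
  · exact (hA.inter_of_left B).offDiag
  · exact pairsAtDist_inter_subset_offDiag

def HasRichDistances (P : Set α) (n : ℕ) : Prop :=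
  P.Finite ∧ P.ncard = n ∧
    ∃ D : Finset ℝ, n / 4 ≤ #D ∧ ∀ d ∈ D, 0 < d ∧ 2 * (n + 1) ≤ (pairsAtDist P d).ncard

end PairsAtDist

section Isometry

variable {α β : Type*} [MetricSpace α] [PseudoMetricSpace β] {f : α → β}

lemma Isometry.pairsAtDist_image (hf : Isometry f) (P : Set α) (d : ℝ) :
    pairsAtDist (f '' P) d = Prod.map f f '' pairsAtDist P d := by
  ext ⟨x, y⟩
  constructor
  · rintro ⟨⟨p, hp, rfl⟩, ⟨q, hq, rfl⟩, hne, hd⟩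
    exact ⟨(p, q), ⟨hp, hq, fun h => hne (congrArg f h), hf.dist_eq p q ▸ hd⟩, rfl⟩
  · rintro ⟨⟨p, q⟩, ⟨hp, hq, hne, hd⟩, hpq⟩
    simp only [Prod.map, Prod.mk.injEq] at hpq
    obtain ⟨rfl, rfl⟩ := hpq
    exact ⟨⟨p, hp, rfl⟩, ⟨q, hq, rfl⟩, hf.injective.ne hne, (hf.dist_eq p q).trans hd⟩

lemma Isometry.ncard_pairsAtDist_image (hf : Isometry f) (P : Set α) (d : ℝ) :
    (pairsAtDist (f '' P) d).ncard = (pairsAtDist P d).ncard := by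
  rw [hf.pairsAtDist_image, Set.ncard_image_of_injective _
    (hf.injective.prodMap hf.injective)]

lemma HasRichDistances.image {P : Set α} {n : ℕ} (h : HasRichDistances P n) (hf : Isometry f) :
    HasRichDistances (f '' P) n := by
  obtain ⟨hfin, hcard, D, hD, hrich⟩ := h
  refine ⟨hfin.image f, (Set.ncard_image_of_injective P hf.injective).trans hcard, D, hD,
    fun d hd => ?_⟩
  rw [hf.ncard_pairsAtDist_image]
  exact hrich d hd

end Isometry

lemma Complex.eq_or_eq_of_add_eq_add {a b z w : ℂ} (ha : ‖a‖ = 1) (hb : ‖b‖ = 1) (hz : ‖z‖ = 1)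
    (hw : ‖w‖ = 1) (hsum : z + w = a + b) (hab : a + b ≠ 0) : z = a ∨ z = b := by
  have hconj : ∀ u : ℂ, ‖u‖ = 1 → conj u * u = 1 := fun u hu => by
    rw [conj_mul', hu]; norm_num
  have hconj_ne : conj (a + b) ≠ 0 := (_root_.map_ne_zero _).2 hab
  -- conjugation inverts unit vectors, so `z * w` and `a * b` both equal `(a + b) / conj (a + b)`
  have hprod : z * w = a * b := mul_left_cancel₀ hconj_ne <| by
    have hsum' : conj a + conj b = conj z + conj w := by simp only [← map_add, hsum]
    rw [map_add]
    linear_combination w * hconj z hz + z * hconj w hw - b * hconj a ha - a * hconj b hb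
      + z * w * hsum' + hsum
  have : (z - a) * (z - b) = 0 := by linear_combination z * hsum - hprod
  rcases mul_eq_zero.1 this with h | h
  · exact .inl (sub_eq_zero.1 h)
  · exact .inr (sub_eq_zero.1 h)

section RootsOfUnity

variable {N : ℕ}

lemma nthRootsFinset_one_inter_image_sub {a : ℂ} (hN : 0 < N)
    (ha : a ∈ nthRootsFinset N (1 : ℂ)) (h1a : 1 + a ≠ 0) :
    (nthRootsFinset N (1 : ℂ) : Set ℂ) ∩ (1 + a - ·) '' nthRootsFinset N (1 : ℂ) =
      ↑({1, a} : Finset ℂ) := by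
  have hnorm : ∀ z ∈ nthRootsFinset N (1 : ℂ), ‖z‖ = 1 := fun z hz =>
    norm_eq_one_of_pow_eq_one ((mem_nthRootsFinset hN 1).1 hz) hN.ne'
  have h1 : (1 : ℂ) ∈ nthRootsFinset N (1 : ℂ) := (mem_nthRootsFinset hN 1).2 (one_pow N)
  ext z
  simp only [Set.mem_inter_iff, Set.mem_image, Finset.mem_coe, Finset.coe_insert,
    Finset.coe_singleton, Set.mem_insert_iff, Set.mem_singleton_iff]
  constructor
  · rintro ⟨hz, w, hw, rfl⟩
    exact eq_or_eq_of_add_eq_add (hnorm 1 h1) (hnorm a ha) (hnorm _ hz) (hnorm w hw) (by ring) h1a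
  · rintro (rfl | rfl)
    exacts [⟨h1, _, ha, by ring⟩, ⟨ha, 1, h1, by ring⟩]

lemma IsPrimitiveRoot.two_mul_le_ncard_pairsAtDist {ζ : ℂ} (hζ : IsPrimitiveRoot ζ N) {k : ℕ}
    (hk : 0 < k) (h2k : 2 * k < N) :
    2 * N ≤ (pairsAtDist (nthRootsFinset N (1 : ℂ) : Set ℂ) ‖1 - ζ ^ k‖).ncard := by
  have hN : 0 < N := by omega
  have hζ0 : ζ ≠ 0 := hζ.ne_zero hN.ne'
  have hnorm : ∀ i, ‖ζ ^ i‖ = 1 := fun i => by rw [norm_pow, hζ.norm'_eq_one hN.ne', one_pow]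
  have hmem : ∀ i, ζ ^ i ∈ nthRootsFinset N (1 : ℂ) := fun i =>
    (Polynomial.mem_nthRootsFinset hN 1).2 <| by
      rw [← pow_mul, mul_comm, pow_mul, hζ.pow_eq_one, one_pow]
  let steps : Finset ℕ := {k, N - k}
  have hsteps : ∀ s ∈ steps, 0 < s ∧ s < N ∧ ‖1 - ζ ^ s‖ = ‖1 - ζ ^ k‖ := by
    simp only [steps, Finset.mem_insert, Finset.mem_singleton]
    rintro s (rfl | rfl)
    · exact ⟨hk, by omega, rfl⟩
    · refine ⟨by omega, by omega, ?_⟩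
      calc ‖1 - ζ ^ (N - k)‖ = ‖ζ ^ k * (1 - ζ ^ (N - k))‖ := by rw [norm_mul, hnorm, one_mul]
        _ = ‖1 - ζ ^ k‖ := by
          rw [mul_sub, mul_one, ← pow_add, Nat.add_sub_cancel' (by omega), hζ.pow_eq_one,
            norm_sub_rev]
  let f : ℕ × ℕ → ℂ × ℂ := fun p => (ζ ^ p.1, ζ ^ (p.1 + p.2))
  have hinj : Set.InjOn f ↑(range N ×ˢ steps) := by
    rintro ⟨i, s⟩ his ⟨i', s'⟩ his' h
    simp only [Finset.coe_product, Set.mem_prod, Finset.mem_coe, Finset.mem_range] at his his'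
    simp only [f, Prod.mk.injEq] at h
    obtain rfl : i = i' := hζ.pow_inj his.1 his'.1 h.1
    rw [pow_add, pow_add] at h
    rw [hζ.pow_inj (hsteps s his.2).2.1 (hsteps s' his'.2).2.1
      (mul_left_cancel₀ (pow_ne_zero i hζ0) h.2)]
  have hsub : ↑((range N ×ˢ steps).image f) ⊆
      pairsAtDist (nthRootsFinset N (1 : ℂ) : Set ℂ) ‖1 - ζ ^ k‖ := by
    simp only [Finset.coe_image, Set.image_subset_iff]
    rintro ⟨i, s⟩ his
    simp only [Finset.coe_product, Set.mem_prod, Finset.mem_coe] at his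
    obtain ⟨hs0, hsN, hsk⟩ := hsteps s his.2
    have hdist : ζ ^ i - ζ ^ (i + s) = ζ ^ i * (1 - ζ ^ s) := by ring
    refine ⟨hmem i, hmem (i + s), ?_, ?_⟩
    · rw [Ne, ← sub_eq_zero, hdist]
      exact mul_ne_zero (pow_ne_zero i hζ0)
        (sub_ne_zero.2 (hζ.pow_ne_one_of_pos_of_lt hs0.ne' hsN).symm)
    · simp only [f, Complex.dist_eq, hdist, norm_mul, hnorm, one_mul, hsk]
  calc 2 * N = #((range N ×ˢ steps).image f) := by
        rw [card_image_of_injOn hinj, card_product, card_range, card_pair (by omega), mul_comm]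
    _ = _ := (Set.ncard_coe_finset _).symm
    _ ≤ _ := Set.ncard_le_ncard hsub (nthRootsFinset N (1 : ℂ)).finite_toSet.pairsAtDist

lemma norm_one_sub_exp_pow (N k : ℕ) :
    ‖1 - cexp (2 * π * I / N) ^ k‖ = 2 * |Real.sin (π * k / N)| := by
  rw [← Complex.exp_nat_mul, norm_sub_rev,
    show (k : ℂ) * (2 * π * I / N) = I * ↑(2 * π * k / N) by push_cast; ring,
    norm_exp_I_mul_ofReal_sub_one, Real.norm_eq_abs, abs_mul, abs_two]
  congr 3
  ring

lemma injOn_norm_one_sub_exp_pow (N : ℕ) :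
    Set.InjOn (fun k : ℕ => ‖1 - cexp (2 * π * I / N) ^ k‖) {k | 2 * k ≤ N} := by
  intro k hk l hl h
  simp only [Set.mem_ofPred_eq, norm_one_sub_exp_pow] at hk hl h
  rcases N.eq_zero_or_pos with rfl | hN
  · omega
  have hN' : (0 : ℝ) < N := by exact_mod_cast hN
  have hmem : ∀ m : ℕ, 2 * m ≤ N → π * m / N ∈ Set.Icc 0 (π / 2) := fun m hm => by
    have : (2 * m : ℝ) ≤ N := by exact_mod_cast hm
    refine ⟨by positivity, ?_⟩
    rw [div_le_iff₀ hN']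
    nlinarith [Real.pi_pos]
  have hsin : ∀ m : ℕ, 2 * m ≤ N → |Real.sin (π * m / N)| = Real.sin (π * m / N) := fun m hm =>
    abs_of_nonneg <| Real.sin_nonneg_of_nonneg_of_le_pi (hmem m hm).1 <| by
      linarith [(hmem m hm).2, Real.pi_pos]
  rw [hsin k hk, hsin l hl] at h
  have hIcc : Set.Icc 0 (π / 2) ⊆ Set.Icc (-(π / 2)) (π / 2) :=
    Set.Icc_subset_Icc_left (by linarith [Real.pi_pos])
  have := Real.strictMonoOn_sin.injOn (hIcc (hmem k hk)) (hIcc (hmem l hl)) (by linarith)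
  field_simp at this
  exact_mod_cast this

end RootsOfUnity

lemma hasRichDistances_nthRootsFinset_union_image_sub {N n : ℕ} {a : ℂ}
    (ha : a ∈ nthRootsFinset N (1 : ℂ)) (h1a : 1 + a ≠ 0) (hn : n + #{1, a} = 2 * N) :
    HasRichDistances
      ((nthRootsFinset N (1 : ℂ) : Set ℂ) ∪ (1 + a - ·) '' nthRootsFinset N (1 : ℂ)) n := by
  set R : Set ℂ := ↑(nthRootsFinset N (1 : ℂ))
  have hm1 : 1 ≤ #{1, a} := card_pos.2 (insert_nonempty _ _)
  have hm2 : #{1, a} ≤ 2 := card_le_two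
  have hN : 0 < N := by omega
  have hζ := isPrimitiveRoot_exp N hN.ne'
  have hR : R.Finite := finite_toSet _
  have hrefl : Isometry (1 + a - · : ℂ → ℂ) := Isometry.of_dist_eq fun _ _ => dist_sub_left _ _ _
  have hinter := nthRootsFinset_one_inter_image_sub hN ha h1a
  have hcardR : R.ncard = N := by rw [Set.ncard_coe_finset, hζ.card_nthRootsFinset]
  refine ⟨hR.union (hR.image _), ?_, ?_⟩
  · have := Set.ncard_union_add_ncard_inter R ((1 + a - ·) '' R) hR (hR.image _)
    rw [hinter, Set.ncard_coe_finset, Set.ncard_image_of_injective R hrefl.injective, hcardR]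
      at this
    omega
  set d : ℕ → ℝ := fun k => ‖1 - cexp (2 * π * I / N) ^ k‖
  have hd : Set.InjOn d ↑(Icc 1 ((N - 1) / 2)) := (injOn_norm_one_sub_exp_pow N).mono fun k hk => by
    simp only [coe_Icc, Set.mem_Icc] at hk
    simp only [Set.mem_ofPred_eq]
    omega
  refine ⟨(Icc 1 ((N - 1) / 2)).image d, ?_, ?_⟩
  · rw [card_image_of_injOn hd, Nat.card_Icc]
    omega
  simp only [mem_image, mem_Icc, forall_exists_index, and_imp]
  rintro _ k hk1 hk2 rfl
  refine ⟨norm_pos_iff.2 <| sub_ne_zero.2 <|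
    (hζ.pow_ne_one_of_pos_of_lt (by omega) (by omega)).symm, ?_⟩
  have hcountR : 2 * N ≤ (pairsAtDist R (d k)).ncard :=
    hζ.two_mul_le_ncard_pairsAtDist (by omega) (by omega)
  have hunion := ncard_pairsAtDist_add_le (d := d k) hR (hR.image (1 + a - ·))
  rw [hrefl.ncard_pairsAtDist_image, hinter, ← coe_offDiag, Set.ncard_coe_finset, offDiag_card]
    at hunion
  generalize #{1, a} = m at hm1 hm2 hn hunion
  interval_cases m <;> omega

lemma exists_hasRichDistances_complex (n : ℕ) : ∃ P : Set ℂ, HasRichDistances P n := by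
  rcases Nat.even_or_odd' n with ⟨r, rfl | rfl⟩
  · rcases lt_trichotomy r 1 with hr | rfl | hr
    · obtain rfl : r = 0 := by omega
      exact ⟨∅, Set.finite_empty, Set.ncard_empty _, ∅, le_rfl, by simp⟩
    · exact ⟨{0, 1}, Set.toFinite _, Set.ncard_pair zero_ne_one, ∅, by norm_num, by simp⟩
    · have hζ := isPrimitiveRoot_exp (r + 1) (by omega)
      refine ⟨_, hasRichDistances_nthRootsFinset_union_image_sub
        ((Polynomial.mem_nthRootsFinset (by omega) 1).2 hζ.pow_eq_one) ?_ ?_⟩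
      · intro h
        apply hζ.pow_ne_one_of_pos_of_lt two_ne_zero (by omega : 2 < r + 1)
        rw [eq_neg_of_add_eq_zero_right h]
        norm_num
      · rw [card_pair (hζ.ne_one (by omega)).symm]
        ring
  · exact ⟨_, hasRichDistances_nthRootsFinset_union_image_sub (N := r + 1)
      ((Polynomial.mem_nthRootsFinset (by omega) 1).2 (one_pow _)) (by norm_num) (by simp; ring)⟩

theorem erdos_rich_distances (n : ℕ) :
    ∃ P : Set (EuclideanSpace ℝ (Fin 2)), P.Finite ∧ P.ncard = n ∧
      ∃ D : Finset ℝ, n / 4 ≤ D.card ∧ ∀ d ∈ D, 0 < d ∧ occursAtLeast P d (n + 1) := by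
  obtain ⟨P, hP⟩ := exists_hasRichDistances_complex n
  exact ⟨_, hP.image Complex.orthonormalBasisOneI.repr.isometry⟩
end

section
/- Let n = 2m be even with m ≥ 2. Let Q be the vertex set of a regular (m+1)-gon with an edge v_1v_2, and let Q' be the reflection of Q across the line through v_1 and v_2. Then P = Q ∪ Q' has exactly n points, and at least ⌊n/4⌋ distinct distances each occur at least n + 1 times in P. -/
open Module Real Set

section PlaneGeometry

variable {V P : Type*} [NormedAddCommGroup V] [InnerProductSpace ℝ V] [MetricSpace P]
  [NormedAddTorsor V P]

theorem IsometryEquiv.collinear_fixedPoints [Fact (finrank ℝ V = 2)] (σ : P ≃ᵢ P) {q : P}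
    (hq : σ q ≠ q) : Collinear ℝ (Function.fixedPoints σ) := by
  have := FiniteDimensional.of_fact_finrank_eq_two (K := ℝ) (V := V)
  have hsub : Function.fixedPoints σ ⊆ AffineSubspace.perpBisector q (σ q) := fun a ha => by
    rw [SetLike.mem_coe, AffineSubspace.mem_perpBisector_iff_dist_eq, ← σ.dist_eq, ha.eq]
  have hline : finrank ℝ (AffineSubspace.perpBisector q (σ q)).direction = 1 := by
    rw [AffineSubspace.direction_perpBisector]
    exact Submodule.finrank_orthogonal_span_singleton (vsub_ne_zero.mpr hq)
  rw [collinear_iff_finrank_le_one, ← hline]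
  exact Submodule.finrank_mono ((vectorSpan_mono ℝ hsub).trans
    (AffineSubspace.direction_eq_vectorSpan _).ge)

theorem EuclideanGeometry.Cospherical.eq_or_eq_of_collinear {s : Set P}
    (hs : EuclideanGeometry.Cospherical s) {a b p : P} (ha : a ∈ s) (hb : b ∈ s) (hp : p ∈ s)
    (hab : a ≠ b) (hcol : Collinear ℝ {a, b, p}) : p = a ∨ p = b := by
  by_contra! h
  exact (affineIndependent_iff_not_collinear_set.mp
    (hs.affineIndependent_of_mem_of_ne ha hb hp hab h.1.symm h.2.symm)) hcol

end PlaneGeometry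

section DistPairs

variable {α β : Type*} [PseudoMetricSpace α] [PseudoMetricSpace β] {P P' : Set α} {d : ℝ}

def distPairs (P : Set α) (d : ℝ) : Set (α × α) :=
  {pq | pq.1 ∈ P ∧ pq.2 ∈ P ∧ pq.1 ≠ pq.2 ∧ dist pq.1 pq.2 = d}

theorem occursAtLeast_iff (P : Set (EuclideanSpace ℝ (Fin 2))) (d : ℝ) (t : ℕ) :
    occursAtLeast P d t ↔ 2 * t ≤ (distPairs P d).ncard :=
  Iff.rfl

theorem swap_mem_distPairs {pq : α × α} (h : pq ∈ distPairs P d) : pq.swap ∈ distPairs P d :=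
  ⟨h.2.1, h.1, h.2.2.1.symm, (dist_comm _ _).trans h.2.2.2⟩

theorem distPairs_mono (h : P ⊆ P') : distPairs P d ⊆ distPairs P' d :=
  fun _ ⟨h1, h2, hne, hd⟩ => ⟨h h1, h h2, hne, hd⟩

theorem distPairs_inter : distPairs (P ∩ P') d = distPairs P d ∩ distPairs P' d := by
  ext; simp only [distPairs, mem_ofPred_eq, mem_inter_iff]; tauto

theorem distPairs_image (σ : α ≃ᵢ β) :
    distPairs (σ '' P) d = Prod.map σ σ '' distPairs P d := by
  ext ⟨x, y⟩
  constructor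
  · rintro ⟨⟨x, hx, rfl⟩, ⟨y, hy, rfl⟩, hne, hd⟩
    exact ⟨(x, y), ⟨hx, hy, fun h => hne (congrArg σ h), by rwa [← σ.dist_eq]⟩, rfl⟩
  · rintro ⟨⟨x, y⟩, ⟨hx, hy, hne, hd⟩, he⟩
    simp only [Prod.map, Prod.mk.injEq] at he
    obtain ⟨rfl, rfl⟩ := he
    exact ⟨mem_image_of_mem σ hx, mem_image_of_mem σ hy, σ.injective.ne hne,
      by rwa [σ.dist_eq]⟩

theorem ncard_distPairs_pair_le (a b : α) : (distPairs {a, b} d).ncard ≤ 2 := by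
  have hsub : distPairs {a, b} d ⊆ {(a, b), (b, a)} := by
    rintro ⟨x, y⟩ ⟨hx, hy, hne, -⟩
    simp only at hx hy hne
    rcases hx with rfl | rfl <;> rcases hy with rfl | rfl <;> simp_all
  exact (ncard_le_ncard hsub (toFinite _)).trans (ncard_insert_le _ _ |>.trans (by simp))

theorem Set.Finite.distPairs (hP : P.Finite) (d : ℝ) : (distPairs P d).Finite :=
  (hP.prod hP).subset fun _ ⟨h1, h2, _⟩ => ⟨h1, h2⟩

theorem two_mul_ncard_distPairs_le (σ : α ≃ᵢ α) (hP : P.Finite) {a b : α}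
    (h : P ∩ σ '' P ⊆ {a, b}) :
    2 * (distPairs P d).ncard ≤ (distPairs (P ∪ σ '' P) d).ncard + 2 := by
  have hfin : (distPairs P d).Finite := hP.distPairs d
  have himage : (distPairs (σ '' P) d).ncard = (distPairs P d).ncard := by
    rw [distPairs_image, ncard_image_of_injective _ (σ.injective.prodMap σ.injective)]
  have hinter : (distPairs P d ∩ distPairs (σ '' P) d).ncard ≤ 2 := by
    rw [← distPairs_inter]
    exact (ncard_le_ncard (distPairs_mono h) ((toFinite {a, b}).distPairs d)).trans
      (ncard_distPairs_pair_le a b)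
  have hunion :
      (distPairs P d ∪ distPairs (σ '' P) d).ncard ≤ (distPairs (P ∪ σ '' P) d).ncard :=
    ncard_le_ncard (union_subset (distPairs_mono subset_union_left)
      (distPairs_mono subset_union_right)) ((hP.union (hP.image σ)).distPairs d)
  have := ncard_union_add_ncard_inter _ _ hfin ((hP.image σ).distPairs d)
  omega

end DistPairs

theorem Real.cos_two_pi_int_div_eq_iff {N : ℕ} (hN : N ≠ 0) (a b : ℤ) :
    cos (2 * π * a / N) = cos (2 * π * b / N) ↔ (N : ℤ) ∣ a - b ∨ (N : ℤ) ∣ a + b := by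
  have hN' : (N : ℝ) ≠ 0 := Nat.cast_ne_zero.mpr hN
  have key : ∀ z : ℤ, (∃ k : ℤ, 2 * π * z / N = 2 * k * π) ↔ (N : ℤ) ∣ z := fun z =>
    exists_congr fun k => by
      rw [div_eq_iff hN', ← Int.cast_inj (α := ℝ), Int.cast_mul, Int.cast_natCast,
        show 2 * k * π * N = 2 * π * (N * k) by ring, mul_right_inj' two_pi_pos.ne']
  rw [cos_eq_cos_iff, exists_or, dvd_sub_comm, ← key, ← key]
  refine or_congr (exists_congr fun k => ?_) (exists_congr fun k => ?_)
  · rw [Int.cast_sub, mul_sub, sub_div]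
    constructor <;> intro h <;> linarith
  · rw [Int.cast_add, mul_add, add_div]
    constructor <;> intro h <;> linarith

section RegularPolygon

variable (c : EuclideanSpace ℝ (Fin 2)) {r : ℝ} (φ : ℝ) {N : ℕ}

theorem dist_add_pt_add_pt (x y x' y' : ℝ) :
    dist (c + pt x y) (c + pt x' y') = √((x - x') ^ 2 + (y - y') ^ 2) := by
  rw [dist_add_left, EuclideanSpace.dist_eq]
  simp [pt, Fin.sum_univ_two, Real.dist_eq, sq_abs]

theorem dist_vtx_center (j : ℕ) : dist (vtx c r φ N j) c = |r| := by
  set θ := 2 * π * j / N + φ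
  have h : dist (vtx c r φ N j) (c + pt 0 0) = |r| := by
    rw [vtx, dist_add_pt_add_pt, ← Real.sqrt_sq_eq_abs]
    congr 1
    linear_combination r ^ 2 * sin_sq_add_cos_sq θ
  rwa [show pt 0 0 = 0 from by ext i; fin_cases i <;> simp [pt], add_zero] at h

theorem dist_vtx_sq (a b : ℕ) :
    dist (vtx c r φ N a) (vtx c r φ N b) ^ 2 =
      2 * r ^ 2 * (1 - cos (2 * π * ((a : ℝ) - b) / N)) := by
  set α := 2 * π * a / N + φ
  set β := 2 * π * b / N + φ
  rw [vtx, vtx, dist_add_pt_add_pt, Real.sq_sqrt (by positivity),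
    show 2 * π * ((a : ℝ) - b) / N = α - β by ring, cos_sub]
  linear_combination r ^ 2 * (sin_sq_add_cos_sq α + sin_sq_add_cos_sq β)

theorem vtx_periodic (hN : N ≠ 0) : Function.Periodic (vtx c r φ N) N := fun j => by
  have hN' : (N : ℝ) ≠ 0 := Nat.cast_ne_zero.mpr hN
  rw [vtx, vtx, Nat.cast_add, show 2 * π * (j + N) / N + φ = 2 * π * j / N + φ + 2 * π by
    field_simp; ring, cos_add_two_pi, sin_add_two_pi]

theorem image_vtx_Icc (hN : N ≠ 0) : vtx c r φ N '' Icc 1 N = range (vtx c r φ N) := by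
  refine (image_subset_range _ _).antisymm ?_
  rintro _ ⟨j, rfl⟩
  refine ⟨(j + N - 1) % N + 1, ⟨by omega, Nat.mod_lt _ (Nat.pos_of_ne_zero hN)⟩, ?_⟩
  rw [((vtx_periodic c φ hN).add_const 1).map_mod_nat, Nat.sub_add_cancel (by omega),
    vtx_periodic c φ hN]

theorem finite_range_vtx (hN : N ≠ 0) : (range (vtx c r φ N)).Finite :=
  image_vtx_Icc c φ hN ▸ (finite_Icc 1 N).image _

theorem dist_vtx_add (j k : ℕ) :
    dist (vtx c r φ N j) (vtx c r φ N (j + k)) = dist (vtx c r φ N k) (vtx c r φ N 0) := by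
  rw [← sq_eq_sq₀ dist_nonneg dist_nonneg, dist_vtx_sq, dist_vtx_sq, Nat.cast_add,
    show (j : ℝ) - (j + k) = -(k - (0 : ℕ)) by push_cast; ring, mul_neg, neg_div, cos_neg]

theorem dist_vtx_eq_dist_vtx_iff (hr : r ≠ 0) (hN : N ≠ 0) (a b a' b' : ℕ) :
    dist (vtx c r φ N a) (vtx c r φ N b) = dist (vtx c r φ N a') (vtx c r φ N b') ↔
      (N : ℤ) ∣ (a - b : ℤ) - (a' - b') ∨ (N : ℤ) ∣ (a - b : ℤ) + (a' - b') := by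
  rw [← sq_eq_sq₀ dist_nonneg dist_nonneg, dist_vtx_sq, dist_vtx_sq,
    mul_right_inj' (by positivity : (2 : ℝ) * r ^ 2 ≠ 0), sub_right_inj]
  have hcast : ∀ x y : ℕ, (x : ℝ) - y = ((x - y : ℤ) : ℝ) := by simp
  rw [hcast, hcast]
  exact cos_two_pi_int_div_eq_iff hN _ _

theorem vtx_eq_vtx_iff (hr : r ≠ 0) (hN : N ≠ 0) (a b : ℕ) :
    vtx c r φ N a = vtx c r φ N b ↔ (N : ℤ) ∣ a - b := by
  rw [← dist_eq_zero, ← dist_self (vtx c r φ N a), dist_vtx_eq_dist_vtx_iff c φ hr hN]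
  simp

theorem eq_of_vtx_eq_vtx (hr : r ≠ 0) (hN : N ≠ 0) {a b : ℕ}
    (h : vtx c r φ N a = vtx c r φ N b) (hab : a < b + N) (hba : b < a + N) : a = b := by
  have := Int.eq_zero_of_abs_lt_dvd ((vtx_eq_vtx_iff c φ hr hN a b).mp h)
    (abs_lt.mpr ⟨by omega, by omega⟩)
  omega

theorem vtx_one_ne_vtx_two (hr : r ≠ 0) (hN : 2 ≤ N) : vtx c r φ N 1 ≠ vtx c r φ N 2 :=
  fun h => by have := eq_of_vtx_eq_vtx c φ hr (by omega) h (by omega) (by omega); omega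

theorem ncard_range_vtx (hr : r ≠ 0) (hN : N ≠ 0) : (range (vtx c r φ N)).ncard = N := by
  have hinj : InjOn (vtx c r φ N) (Icc 1 N) := by
    rintro a ⟨ha1, ha2⟩ b ⟨hb1, hb2⟩ h
    exact eq_of_vtx_eq_vtx c φ hr hN h (by omega) (by omega)
  rw [← image_vtx_Icc c φ hN, hinj.ncard_image, ncard_Icc_nat, Nat.add_sub_cancel]

theorem injOn_dist_vtx_zero (hr : r ≠ 0) (hN : N ≠ 0) :
    InjOn (fun k => dist (vtx c r φ N k) (vtx c r φ N 0)) {k | 2 * k < N} := by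
  intro k hk k' hk' h
  simp only [mem_ofPred_eq] at hk hk'
  rcases (dist_vtx_eq_dist_vtx_iff c φ hr hN k 0 k' 0).mp h with h | h
  · have := Int.eq_zero_of_abs_lt_dvd h (abs_lt.mpr ⟨by omega, by omega⟩)
    omega
  · have := Int.eq_zero_of_abs_lt_dvd h (abs_lt.mpr ⟨by omega, by omega⟩)
    omega

theorem two_mul_le_ncard_distPairs_range_vtx (hr : r ≠ 0) {k : ℕ} (hk : 0 < k)
    (h2k : 2 * k < N) :
    2 * N ≤ (distPairs (range (vtx c r φ N)) (dist (vtx c r φ N k) (vtx c r φ N 0))).ncard := by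
  classical
  have hN : N ≠ 0 := by omega
  set v := vtx c r φ N
  let A := (Finset.range N).image fun j => (v j, v (j + k))
  have hA : A.card = N := by
    rw [Finset.card_image_of_injOn, Finset.card_range]
    intro j hj j' hj' h
    simp only [Finset.coe_range, mem_Iio] at hj hj'
    exact eq_of_vtx_eq_vtx c φ hr hN (Prod.mk.inj h).1 (by omega) (by omega)
  have hdisj : Disjoint A (A.image Prod.swap) := by
    simp only [Finset.disjoint_left, A, Finset.image_image, Finset.mem_image, Function.comp,
      Prod.swap_prod_mk, not_exists, not_and]
    rintro _ ⟨j, -, rfl⟩ j' - h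
    obtain ⟨h1, h2⟩ := Prod.mk.inj h
    rw [vtx_eq_vtx_iff c φ hr hN] at h1 h2
    have h2k : (N : ℤ) ∣ 2 * k := by convert Int.dvd_sub h1 h2 using 1; push_cast; ring
    have := Int.le_of_dvd (by omega) h2k
    omega
  have hsub : ↑(A ∪ A.image Prod.swap) ⊆ distPairs (range v) (dist (v k) (v 0)) := by
    have hA : ↑A ⊆ distPairs (range v) (dist (v k) (v 0)) := by
      simp only [A, Finset.coe_image]
      rintro _ ⟨j, -, rfl⟩
      refine ⟨mem_range_self _, mem_range_self _, fun h => ?_, dist_vtx_add c φ j k⟩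
      have := eq_of_vtx_eq_vtx c φ hr hN h (by omega) (by omega)
      omega
    rw [Finset.coe_union, Finset.coe_image (f := Prod.swap)]
    exact union_subset hA (image_subset_iff.mpr fun _ hx => swap_mem_distPairs (hA hx))
  calc 2 * N = (A ∪ A.image Prod.swap).card := by
        rw [Finset.card_union_of_disjoint hdisj,
          Finset.card_image_of_injective _ Prod.swap_injective, hA, two_mul]
    _ = (↑(A ∪ A.image Prod.swap) : Set _).ncard := (ncard_coe_finset _).symm
    _ ≤ _ := ncard_le_ncard hsub ((finite_range_vtx c φ hN).distPairs _)

theorem vtx_eq_vtx_of_dist_eq_of_dist_eq (hr : r ≠ 0) (hN : 3 ≤ N) {i j : ℕ}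
    (h1 : dist (vtx c r φ N i) (vtx c r φ N 1) = dist (vtx c r φ N j) (vtx c r φ N 1))
    (h2 : dist (vtx c r φ N i) (vtx c r φ N 2) = dist (vtx c r φ N j) (vtx c r φ N 2)) :
    vtx c r φ N i = vtx c r φ N j := by
  rw [vtx_eq_vtx_iff c φ hr (by omega)]
  rw [dist_vtx_eq_dist_vtx_iff c φ hr (by omega)] at h1 h2
  rcases h1 with h1 | h1
  · convert h1 using 1; push_cast; ring
  rcases h2 with h2 | h2
  · convert h2 using 1; push_cast; ring
  have h12 : (N : ℤ) ∣ 2 := by convert Int.dvd_sub h1 h2 using 1; push_cast; ring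
  have := Int.le_of_dvd two_pos h12
  omega

theorem range_vtx_inter_image_subset (hr : r ≠ 0) (hN : 3 ≤ N)
    (σ : EuclideanSpace ℝ (Fin 2) ≃ᵢ EuclideanSpace ℝ (Fin 2))
    (hσ1 : σ (vtx c r φ N 1) = vtx c r φ N 1) (hσ2 : σ (vtx c r φ N 2) = vtx c r φ N 2)
    (hne : ∃ p, σ p ≠ p) :
    range (vtx c r φ N) ∩ σ '' range (vtx c r φ N) ⊆ {vtx c r φ N 1, vtx c r φ N 2} := by
  have : Fact (finrank ℝ (EuclideanSpace ℝ (Fin 2)) = 2) := ⟨finrank_euclideanSpace_fin⟩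
  set v := vtx c r φ N
  rintro _ ⟨⟨i, rfl⟩, _, ⟨j, rfl⟩, hji⟩
  have h1 : dist (v i) (v 1) = dist (v j) (v 1) := by rw [← hji, ← σ.dist_eq (v j), hσ1]
  have h2 : dist (v i) (v 2) = dist (v j) (v 2) := by rw [← hji, ← σ.dist_eq (v j), hσ2]
  have hij : v i = v j := vtx_eq_vtx_of_dist_eq_of_dist_eq c φ hr hN h1 h2
  have hfix : {v 1, v 2, v i} ⊆ Function.fixedPoints σ := by
    rintro _ (rfl | rfl | rfl)
    exacts [hσ1, hσ2, hij ▸ hji]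
  obtain ⟨q, hq⟩ := hne
  have hcirc : EuclideanGeometry.Cospherical (range v) :=
    ⟨c, |r|, by rintro _ ⟨j, rfl⟩; exact dist_vtx_center c φ j⟩
  exact hcirc.eq_or_eq_of_collinear (mem_range_self 1) (mem_range_self 2) (mem_range_self i)
    (vtx_one_ne_vtx_two c φ hr (by omega))
    ((σ.collinear_fixedPoints hq).subset hfix)

theorem ncard_range_vtx_union_image (hr : r ≠ 0) (hN : 3 ≤ N)
    (σ : EuclideanSpace ℝ (Fin 2) ≃ᵢ EuclideanSpace ℝ (Fin 2))
    (hσ1 : σ (vtx c r φ N 1) = vtx c r φ N 1) (hσ2 : σ (vtx c r φ N 2) = vtx c r φ N 2)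
    (hne : ∃ p, σ p ≠ p) :
    (range (vtx c r φ N) ∪ σ '' range (vtx c r φ N)).ncard + 2 = 2 * N := by
  set v := vtx c r φ N
  have hinter : range v ∩ σ '' range v = {v 1, v 2} :=
    (range_vtx_inter_image_subset c φ hr hN σ hσ1 hσ2 hne).antisymm <| by
      rintro _ (rfl | rfl)
      exacts [⟨mem_range_self 1, v 1, mem_range_self 1, hσ1⟩,
        ⟨mem_range_self 2, v 2, mem_range_self 2, hσ2⟩]
  have hfin : (range v).Finite := finite_range_vtx c φ (by omega)
  have hcard : (range v).ncard = N := ncard_range_vtx c φ hr (by omega)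
  have := ncard_union_add_ncard_inter _ _ hfin (hfin.image σ)
  rw [hinter, ncard_pair (vtx_one_ne_vtx_two c φ hr (by omega)),
    ncard_image_of_injective _ σ.injective, hcard] at this
  omega

end RegularPolygon

theorem rich_distances_even_case_general (m : ℕ) (hm : 2 ≤ m)
    (c : EuclideanSpace ℝ (Fin 2)) (r φ : ℝ) (hr : 0 < r)
    (σ : EuclideanSpace ℝ (Fin 2) ≃ᵢ EuclideanSpace ℝ (Fin 2))
    (hσ1 : σ (vtx c r φ (m + 1) 1) = vtx c r φ (m + 1) 1)
    (hσ2 : σ (vtx c r φ (m + 1) 2) = vtx c r φ (m + 1) 2)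
    (hne : ∃ p, σ p ≠ p)
    (Q Q' : Set (EuclideanSpace ℝ (Fin 2)))
    (hQ : Q = vtx c r φ (m + 1) '' Set.Icc 1 (m + 1))
    (hQ' : Q' = σ '' Q) :
    (Q ∪ Q').ncard = 2 * m ∧
      ∃ D : Finset ℝ, (2 * m) / 4 ≤ D.card ∧
        ∀ d ∈ D, occursAtLeast (Q ∪ Q') d (2 * m + 1) := by
  have hN : m + 1 ≠ 0 := by omega
  rw [image_vtx_Icc c φ hN] at hQ
  subst hQ hQ'
  set v := vtx c r φ (m + 1)
  have hfin : (range v).Finite := finite_range_vtx c φ hN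
  refine ⟨?_, (Finset.Icc 1 (m / 2)).image fun k => dist (v k) (v 0), ?_, ?_⟩
  · have hcard : (range v ∪ σ '' range v).ncard + 2 = 2 * (m + 1) :=
      ncard_range_vtx_union_image c φ hr.ne' (by omega) σ hσ1 hσ2 hne
    omega
  · rw [Finset.card_image_of_injOn, Nat.card_Icc]
    · omega
    exact (injOn_dist_vtx_zero c φ hr.ne' hN).mono fun k hk => by
      simp only [Finset.coe_Icc, mem_Icc] at hk
      simp only [mem_ofPred_eq]
      omega
  · simp only [Finset.mem_image, Finset.mem_Icc]
    rintro _ ⟨k, ⟨hk1, hk2⟩, rfl⟩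
    have hQ : 2 * (m + 1) ≤ (distPairs (range v) (dist (v k) (v 0))).ncard :=
      two_mul_le_ncard_distPairs_range_vtx c φ hr.ne' hk1 (by omega)
    have := two_mul_ncard_distPairs_le σ hfin
      (range_vtx_inter_image_subset c φ hr.ne' (by omega) σ hσ1 hσ2 hne) (d := dist (v k) (v 0))
    rw [occursAtLeast_iff]
    omega

theorem rich_distances_even_case (m : ℕ) (hm : 2 ≤ m)
    (c : EuclideanSpace ℝ (Fin 2)) (r φ : ℝ) (hr : 0 < r)
    (σ : EuclideanSpace ℝ (Fin 2) ≃ᵢ EuclideanSpace ℝ (Fin 2))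
    (hσ1 : σ (vtx c r φ (m + 1) 1) = vtx c r φ (m + 1) 1)
    (hσ2 : σ (vtx c r φ (m + 1) 2) = vtx c r φ (m + 1) 2)
    (hinv : ∀ p, σ (σ p) = p) (hne : ∃ p, σ p ≠ p)
    (Q Q' : Set (EuclideanSpace ℝ (Fin 2)))
    (hQ : Q = vtx c r φ (m + 1) '' Set.Icc 1 (m + 1))
    (hQ' : Q' = σ '' Q) :
    (Q ∪ Q').ncard = 2 * m ∧
      ∃ D : Finset ℝ, (2 * m) / 4 ≤ D.card ∧
        ∀ d ∈ D, occursAtLeast (Q ∪ Q') d (2 * m + 1) :=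
  rich_distances_even_case_general m hm c r φ hr σ hσ1 hσ2 hne Q Q' hQ hQ'
end

section
/- Let Q be the vertex set of a regular (m+1)-gon and Q' its reflection across the line through adjacent vertices v_1, v_2. Then the only pair of points lying both in Q and in Q', and hence counted twice in the union, is {v_1, v_2}, realizing the edge length ‖v_1 - v_2‖ by the single shared edge v_1v_2; all other vertex pairs of Q and Q' are distinct pairs in Q ∪ Q'. -/
open Real

private lemma vtx0 (c : EuclideanSpace ℝ (Fin 2)) (r φ : ℝ) (N j : ℕ) :
    vtx c r φ N j 0 = c 0 + r * cos (2*π*j/N + φ) := rfl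

private lemma vtx1 (c : EuclideanSpace ℝ (Fin 2)) (r φ : ℝ) (N j : ℕ) :
    vtx c r φ N j 1 = c 1 + r * sin (2*π*j/N + φ) := rfl

private lemma dsq (x y : EuclideanSpace ℝ (Fin 2)) :
    dist x y ^ 2 = (x 0 - y 0)^2 + (x 1 - y 1)^2 := by
  rw [EuclideanSpace.dist_eq, Real.sq_sqrt (by positivity)]
  simp [Fin.sum_univ_two, Real.dist_eq, sq_abs]

private lemma lin2 {B0 B1 C0 C1 u0 u1 : ℝ} (h1 : u0*B0 + u1*B1 = 0)
    (h2 : u0*C0 + u1*C1 = 0) (hD : B0*C1 - B1*C0 ≠ 0) : u0 = 0 ∧ u1 = 0 := by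
  constructor
  · have h : u0 * (B0*C1 - B1*C0) = 0 := by linear_combination C1 * h1 - B1 * h2
    rcases mul_eq_zero.mp h with h | h
    · exact h
    · exact absurd h hD
  · have h : u1 * (B0*C1 - B1*C0) = 0 := by linear_combination B0 * h2 - C0 * h1
    rcases mul_eq_zero.mp h with h | h
    · exact h
    · exact absurd h hD

private lemma core3 {a0 a1 b0 b1 c0 c1 x0 x1 y0 y1 : ℝ}
    (hcr : (b0-a0)*(c1-a1) - (b1-a1)*(c0-a0) ≠ 0)
    (hA : (y0-a0)^2 + (y1-a1)^2 = (x0-a0)^2 + (x1-a1)^2)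
    (hB : (y0-b0)^2 + (y1-b1)^2 = (x0-b0)^2 + (x1-b1)^2)
    (hC : (y0-c0)^2 + (y1-c1)^2 = (x0-c0)^2 + (x1-c1)^2) :
    y0 = x0 ∧ y1 = x1 := by
  have h1 : (y0-x0)*(b0-a0) + (y1-x1)*(b1-a1) = 0 := by linear_combination (hA - hB)/2
  have h2 : (y0-x0)*(c0-a0) + (y1-x1)*(c1-a1) = 0 := by linear_combination (hA - hC)/2
  obtain ⟨e0, e1⟩ := lin2 h1 h2 hcr
  constructor <;> linarith

private lemma core2 {a0 a1 b0 b1 x0 x1 y0 y1 : ℝ}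
    (hS : (b0-a0)^2 + (b1-a1)^2 ≠ 0)
    (hA : (y0-a0)^2 + (y1-a1)^2 = (x0-a0)^2 + (x1-a1)^2)
    (hB : (y0-b0)^2 + (y1-b1)^2 = (x0-b0)^2 + (x1-b1)^2) :
    (y0 = x0 ∧ y1 = x1) ∨
      (b0-a0)*(y1-a1) - (b1-a1)*(y0-a0) = -((b0-a0)*(x1-a1) - (b1-a1)*(x0-a0)) := by
  have hG : (y0-x0)*(b0-a0) + (y1-x1)*(b1-a1) = 0 := by linear_combination (hA - hB)/2
  have hGG : (b0-a0)*(y0-a0)+(b1-a1)*(y1-a1) = (b0-a0)*(x0-a0)+(b1-a1)*(x1-a1) := by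
    linear_combination hG
  have hF2 : ((b0-a0)*(y1-a1) - (b1-a1)*(y0-a0))^2
      = ((b0-a0)*(x1-a1) - (b1-a1)*(x0-a0))^2 := by
    linear_combination ((b0-a0)^2+(b1-a1)^2) * hA -
      ((b0-a0)*(y0-a0)+(b1-a1)*(y1-a1) + (b0-a0)*(x0-a0)+(b1-a1)*(x1-a1)) * hGG
  have hprod : (((b0-a0)*(y1-a1) - (b1-a1)*(y0-a0)) - ((b0-a0)*(x1-a1) - (b1-a1)*(x0-a0)))
      * (((b0-a0)*(y1-a1) - (b1-a1)*(y0-a0)) + ((b0-a0)*(x1-a1) - (b1-a1)*(x0-a0))) = 0 := by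
    linear_combination hF2
  rcases mul_eq_zero.mp hprod with h | h
  · left
    have h1 : (y0-x0)*(-(b1-a1)) + (y1-x1)*(b0-a0) = 0 := by linear_combination h
    have h2 : (y0-x0)*(b0-a0) + (y1-x1)*(b1-a1) = 0 := hG
    have hD : (-(b1-a1))*(b1-a1) - (b0-a0)*(b0-a0) ≠ 0 := by
      intro hz; apply hS; linear_combination -hz
    obtain ⟨e0, e1⟩ := lin2 h1 h2 hD
    constructor <;> linarith
  · right; linarith

private lemma cos_lt_aux {y x : ℝ} (hy : 0 < y) (hxy : y < x)
    (hx : x < 2*π - y) : cos x < cos y := by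
  rcases le_or_gt x π with h | h
  · exact Real.cos_lt_cos_of_nonneg_of_le_pi (le_of_lt hy) h hxy
  · rw [← Real.cos_two_pi_sub]
    exact Real.cos_lt_cos_of_nonneg_of_le_pi (le_of_lt hy) (by linarith) (by linarith)

private lemma sin_expr_pos {N j : ℕ} (hN : 3 ≤ N) (hj3 : 3 ≤ j) (hjN : j ≤ N) :
    0 < sin (2*π/N) + sin (2*π/N*((j:ℝ)-2)) - sin (2*π/N*((j:ℝ)-1)) := by
  have hN' : (3:ℝ) ≤ N := by exact_mod_cast hN
  have hj' : (3:ℝ) ≤ j := by exact_mod_cast hj3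
  have hjN' : (j:ℝ) ≤ N := by exact_mod_cast hjN
  have hNpos : (0:ℝ) < N := by linarith
  have hspos : 0 < sin (π/N) := by
    apply Real.sin_pos_of_pos_of_lt_pi
    · exact div_pos pi_pos hNpos
    · exact div_lt_self pi_pos (by linarith)
  have heq : sin (2*π/(N:ℝ)) + sin (2*π/N*((j:ℝ)-2)) - sin (2*π/N*((j:ℝ)-1))
      = 2 * sin (π/N) * (cos (π/N) - cos (π/N*(2*(j:ℝ)-3))) := by
    have h1 : 2*π/(N:ℝ) = 2*(π/N) := by ring
    have h2 : 2*π/(N:ℝ)*((j:ℝ)-2) = π/N*(2*(j:ℝ)-3) - π/N := by ring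
    have h3 : 2*π/(N:ℝ)*((j:ℝ)-1) = π/N*(2*(j:ℝ)-3) + π/N := by ring
    rw [h2, h3, h1, Real.sin_two_mul, Real.sin_sub, Real.sin_add]; ring
  rw [heq]
  have hy0 : 0 < π/(N:ℝ) := div_pos pi_pos hNpos
  have hcos : cos (π/N*(2*(j:ℝ)-3)) < cos (π/N) := by
    apply cos_lt_aux hy0
    · nlinarith [hy0]
    · have h : π/(N:ℝ)*(2*(j:ℝ)-3) ≤ 2*π - 3*(π/N) := by
        rw [show 2*π - 3*(π/(N:ℝ)) = π/N*(2*(N:ℝ)-3) from by field_simp]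
        have : (2*(j:ℝ)-3) ≤ 2*(N:ℝ)-3 := by linarith
        nlinarith [hy0]
      linarith [hy0]
  nlinarith [hspos, hcos]

private lemma Fvtx (c : EuclideanSpace ℝ (Fin 2)) (r φ : ℝ) (N j : ℕ) :
    (vtx c r φ N 2 0 - vtx c r φ N 1 0) * (vtx c r φ N j 1 - vtx c r φ N 1 1)
      - (vtx c r φ N 2 1 - vtx c r φ N 1 1) * (vtx c r φ N j 0 - vtx c r φ N 1 0)
    = r^2 * (sin (2*π/N) + sin (2*π/N*((j:ℝ)-2)) - sin (2*π/N*((j:ℝ)-1))) := by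
  simp only [vtx0, vtx1]
  push_cast
  have sA : sin (2*π/(N:ℝ)) = sin (2*π*2/N + φ) * cos (2*π/N + φ)
      - cos (2*π*2/N + φ) * sin (2*π/N + φ) := by
    conv_lhs => rw [show 2*π/(N:ℝ) = (2*π*2/N + φ) - (2*π/N + φ) from by ring]
    rw [Real.sin_sub]
  have sB : sin (2*π/(N:ℝ)*((j:ℝ)-2)) = sin (2*π*j/N + φ) * cos (2*π*2/N + φ)
      - cos (2*π*j/N + φ) * sin (2*π*2/N + φ) := by
    conv_lhs => rw [show 2*π/(N:ℝ)*((j:ℝ)-2) = (2*π*j/N + φ) - (2*π*2/N + φ) from by ring]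
    rw [Real.sin_sub]
  have sT : sin (2*π/(N:ℝ)*((j:ℝ)-1)) = sin (2*π*j/N + φ) * cos (2*π/N + φ)
      - cos (2*π*j/N + φ) * sin (2*π/N + φ) := by
    conv_lhs => rw [show 2*π/(N:ℝ)*((j:ℝ)-1) = (2*π*j/N + φ) - (2*π/N + φ) from by ring]
    rw [Real.sin_sub]
  rw [sA, sB, sT]; ring

private lemma Fpos (c : EuclideanSpace ℝ (Fin 2)) (r φ : ℝ) (hr : 0 < r)
    (N j : ℕ) (hN : 3 ≤ N) (hj3 : 3 ≤ j) (hjN : j ≤ N) :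
    0 < (vtx c r φ N 2 0 - vtx c r φ N 1 0) * (vtx c r φ N j 1 - vtx c r φ N 1 1)
      - (vtx c r φ N 2 1 - vtx c r φ N 1 1) * (vtx c r φ N j 0 - vtx c r φ N 1 0) := by
  rw [Fvtx]
  exact mul_pos (pow_pos hr 2) (sin_expr_pos hN hj3 hjN)

private lemma edge_ne (c : EuclideanSpace ℝ (Fin 2)) (r φ : ℝ) (hr : 0 < r)
    (N : ℕ) (hN : 3 ≤ N) : dist (vtx c r φ N 1) (vtx c r φ N 2) ≠ 0 := by
  have hN' : (3:ℝ) ≤ N := by exact_mod_cast hN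
  have hNpos : (0:ℝ) < N := by linarith
  have hd2 : dist (vtx c r φ N 1) (vtx c r φ N 2)^2 = r^2*(2 - 2*cos (2*π/N)) := by
    rw [dsq, vtx0, vtx0, vtx1, vtx1]
    push_cast
    have hcs : cos (2*π/(N:ℝ)) = cos (2*π*2/N + φ) * cos (2*π/N + φ)
        + sin (2*π*2/N + φ) * sin (2*π/N + φ) := by
      conv_lhs => rw [show 2*π/(N:ℝ) = (2*π*2/N + φ) - (2*π/N + φ) from by ring]
      rw [Real.cos_sub]
    have h1 := Real.sin_sq_add_cos_sq (2*π/(N:ℝ) + φ)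
    have h2 := Real.sin_sq_add_cos_sq (2*π*2/(N:ℝ) + φ)
    rw [hcs]; linear_combination (norm := ring_nf) r^2*h1 + r^2*h2
  have hc1 : cos (2*π/(N:ℝ)) < 1 := by
    have h0 : (0:ℝ) < 2*π/N := by positivity
    have hπ : 2*π/(N:ℝ) ≤ π := by
      rw [div_le_iff₀ hNpos]; nlinarith [pi_pos]
    calc cos (2*π/(N:ℝ)) < cos 0 := Real.cos_lt_cos_of_nonneg_of_le_pi le_rfl hπ h0
    _ = 1 := Real.cos_zero
  intro h
  rw [h] at hd2
  have hpos : (0:ℝ) < r^2 * (2 - 2*cos (2*π/(N:ℝ))) :=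
    mul_pos (pow_pos hr 2) (by linarith)
  nlinarith [hd2, hpos]

theorem reflection_shares_only_edge (m : ℕ) (hm : 2 ≤ m)
    (c : EuclideanSpace ℝ (Fin 2)) (r φ : ℝ) (hr : 0 < r)
    (σ : EuclideanSpace ℝ (Fin 2) ≃ᵢ EuclideanSpace ℝ (Fin 2))
    (hσ1 : σ (vtx c r φ (m + 1) 1) = vtx c r φ (m + 1) 1)
    (hσ2 : σ (vtx c r φ (m + 1) 2) = vtx c r φ (m + 1) 2)
    (hinv : ∀ p, σ (σ p) = p) (hne : ∃ p, σ p ≠ p)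
    (Q Q' : Set (EuclideanSpace ℝ (Fin 2)))
    (hQ : Q = vtx c r φ (m + 1) '' Set.Icc 1 (m + 1))
    (hQ' : Q' = σ '' Q) :
    Q ∩ Q' = {vtx c r φ (m + 1) 1, vtx c r φ (m + 1) 2} ∧
    ∀ p q, p ∈ Q ∩ Q' → q ∈ Q ∩ Q' → p ≠ q →
      ({p, q} : Set (EuclideanSpace ℝ (Fin 2)))
          = {vtx c r φ (m + 1) 1, vtx c r φ (m + 1) 2} ∧
        dist p q = dist (vtx c r φ (m + 1) 1) (vtx c r φ (m + 1) 2) := by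
  have hN : 3 ≤ m + 1 := by omega
  have hedge : dist (vtx c r φ (m+1) 1) (vtx c r φ (m+1) 2) ≠ 0 := edge_ne c r φ hr (m+1) hN
  have hFnonneg : ∀ k, 1 ≤ k → k ≤ m+1 →
      0 ≤ (vtx c r φ (m+1) 2 0 - vtx c r φ (m+1) 1 0)
            * (vtx c r φ (m+1) k 1 - vtx c r φ (m+1) 1 1)
          - (vtx c r φ (m+1) 2 1 - vtx c r φ (m+1) 1 1)
            * (vtx c r φ (m+1) k 0 - vtx c r φ (m+1) 1 0) := by
    intro k hk1 hk2
    rcases eq_or_ne k 1 with rfl | hk1'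
    · have h0 : (vtx c r φ (m+1) 2 0 - vtx c r φ (m+1) 1 0)
            * (vtx c r φ (m+1) 1 1 - vtx c r φ (m+1) 1 1)
          - (vtx c r φ (m+1) 2 1 - vtx c r φ (m+1) 1 1)
            * (vtx c r φ (m+1) 1 0 - vtx c r φ (m+1) 1 0) = 0 := by ring
      linarith
    rcases eq_or_ne k 2 with rfl | hk2'
    · have h0 : (vtx c r φ (m+1) 2 0 - vtx c r φ (m+1) 1 0)
            * (vtx c r φ (m+1) 2 1 - vtx c r φ (m+1) 1 1)
          - (vtx c r φ (m+1) 2 1 - vtx c r φ (m+1) 1 1)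
            * (vtx c r φ (m+1) 2 0 - vtx c r φ (m+1) 1 0) = 0 := by ring
      linarith
    · exact le_of_lt (Fpos c r φ hr (m+1) k hN (by omega) hk2)
  have hmemQ : ∀ k, 1 ≤ k → k ≤ m + 1 → vtx c r φ (m+1) k ∈ Q := by
    intro k h1 h2
    rw [hQ]
    exact ⟨k, ⟨h1, h2⟩, rfl⟩
  have hS : (vtx c r φ (m+1) 2 0 - vtx c r φ (m+1) 1 0)^2
      + (vtx c r φ (m+1) 2 1 - vtx c r φ (m+1) 1 1)^2 ≠ 0 := by
    intro h
    apply hedge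
    have h2' : dist (vtx c r φ (m+1) 1) (vtx c r φ (m+1) 2) ^ 2 = 0 := by
      rw [dsq]; linear_combination h
    exact pow_eq_zero_iff two_ne_zero |>.mp h2'
  have key : ∀ p, p ∈ Q ∩ Q' → p = vtx c r φ (m+1) 1 ∨ p = vtx c r φ (m+1) 2 := by
    rintro p ⟨hpQ, hpQ'⟩
    rw [hQ] at hpQ
    obtain ⟨i, hi, hpi⟩ := hpQ
    rw [hQ', hQ] at hpQ'
    obtain ⟨q, ⟨j, hj, hqj⟩, hpq⟩ := hpQ'
    subst hqj
    subst hpq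
    have d1 : dist (σ (vtx c r φ (m+1) j)) (vtx c r φ (m+1) 1)
        = dist (vtx c r φ (m+1) j) (vtx c r φ (m+1) 1) := by
      conv_lhs => rw [← hσ1]
      exact σ.dist_eq _ _
    have d2 : dist (σ (vtx c r φ (m+1) j)) (vtx c r φ (m+1) 2)
        = dist (vtx c r φ (m+1) j) (vtx c r φ (m+1) 2) := by
      conv_lhs => rw [← hσ2]
      exact σ.dist_eq _ _
    rw [← hpi] at d1 d2 ⊢
    have e1 : (vtx c r φ (m+1) i 0 - vtx c r φ (m+1) 1 0)^2
          + (vtx c r φ (m+1) i 1 - vtx c r φ (m+1) 1 1)^2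
        = (vtx c r φ (m+1) j 0 - vtx c r φ (m+1) 1 0)^2
          + (vtx c r φ (m+1) j 1 - vtx c r φ (m+1) 1 1)^2 := by
      rw [← dsq, ← dsq, d1]
    have e2 : (vtx c r φ (m+1) i 0 - vtx c r φ (m+1) 2 0)^2
          + (vtx c r φ (m+1) i 1 - vtx c r φ (m+1) 2 1)^2
        = (vtx c r φ (m+1) j 0 - vtx c r φ (m+1) 2 0)^2
          + (vtx c r φ (m+1) j 1 - vtx c r φ (m+1) 2 1)^2 := by
      rw [← dsq, ← dsq, d2]
    rcases core2 hS e1 e2 with ⟨h0, h1'⟩ | hF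
    · have hij : vtx c r φ (m+1) i = vtx c r φ (m+1) j := by
        ext t; fin_cases t <;> assumption
      have hfix : σ (vtx c r φ (m+1) j) = vtx c r φ (m+1) j := by
        rw [← hpi]; exact hij
      rcases eq_or_ne j 1 with rfl | hj1
      · left; exact hij
      rcases eq_or_ne j 2 with rfl | hj2
      · right; exact hij
      · exfalso
        have hj3 : 3 ≤ j := by
          have := hj.1; omega
        have hcrj : (vtx c r φ (m+1) 2 0 - vtx c r φ (m+1) 1 0)
              * (vtx c r φ (m+1) j 1 - vtx c r φ (m+1) 1 1)
            - (vtx c r φ (m+1) 2 1 - vtx c r φ (m+1) 1 1)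
              * (vtx c r φ (m+1) j 0 - vtx c r φ (m+1) 1 0) ≠ 0 :=
          ne_of_gt (Fpos c r φ hr (m+1) j hN hj3 hj.2)
        obtain ⟨p₀, hp₀⟩ := hne
        apply hp₀
        have dd1 : dist (σ p₀) (vtx c r φ (m+1) 1) = dist p₀ (vtx c r φ (m+1) 1) := by
          conv_lhs => rw [← hσ1]
          exact σ.dist_eq _ _
        have dd2 : dist (σ p₀) (vtx c r φ (m+1) 2) = dist p₀ (vtx c r φ (m+1) 2) := by
          conv_lhs => rw [← hσ2]
          exact σ.dist_eq _ _
        have dd3 : dist (σ p₀) (vtx c r φ (m+1) j) = dist p₀ (vtx c r φ (m+1) j) := by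
          conv_lhs => rw [← hfix]
          exact σ.dist_eq _ _
        have E1 : (σ p₀ 0 - vtx c r φ (m+1) 1 0)^2 + (σ p₀ 1 - vtx c r φ (m+1) 1 1)^2
            = (p₀ 0 - vtx c r φ (m+1) 1 0)^2 + (p₀ 1 - vtx c r φ (m+1) 1 1)^2 := by
          rw [← dsq, ← dsq, dd1]
        have E2 : (σ p₀ 0 - vtx c r φ (m+1) 2 0)^2 + (σ p₀ 1 - vtx c r φ (m+1) 2 1)^2
            = (p₀ 0 - vtx c r φ (m+1) 2 0)^2 + (p₀ 1 - vtx c r φ (m+1) 2 1)^2 := by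
          rw [← dsq, ← dsq, dd2]
        have E3 : (σ p₀ 0 - vtx c r φ (m+1) j 0)^2 + (σ p₀ 1 - vtx c r φ (m+1) j 1)^2
            = (p₀ 0 - vtx c r φ (m+1) j 0)^2 + (p₀ 1 - vtx c r φ (m+1) j 1)^2 := by
          rw [← dsq, ← dsq, dd3]
        obtain ⟨g0, g1⟩ := core3 hcrj E1 E2 E3
        ext t; fin_cases t <;> assumption
    · have n1 := hFnonneg i hi.1 hi.2
      have n2 := hFnonneg j hj.1 hj.2
      have hzero : (vtx c r φ (m+1) 2 0 - vtx c r φ (m+1) 1 0)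
            * (vtx c r φ (m+1) i 1 - vtx c r φ (m+1) 1 1)
          - (vtx c r φ (m+1) 2 1 - vtx c r φ (m+1) 1 1)
            * (vtx c r φ (m+1) i 0 - vtx c r φ (m+1) 1 0) = 0 := by linarith
      rcases eq_or_ne i 1 with rfl | hi1
      · left; rfl
      rcases eq_or_ne i 2 with rfl | hi2
      · right; rfl
      · exfalso
        have hi3 : 3 ≤ i := by
          have := hi.1; omega
        exact absurd hzero (ne_of_gt (Fpos c r φ hr (m+1) i hN hi3 hi.2))
  constructor
  · apply Set.eq_of_subset_of_subset
    · intro p hp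
      rcases key p hp with h | h
      · rw [h]; exact Set.mem_insert _ _
      · rw [h]; exact Set.mem_insert_of_mem _ rfl
    · intro p hp
      simp only [Set.mem_insert_iff, Set.mem_singleton_iff] at hp
      rcases hp with rfl | rfl
      · refine ⟨hmemQ 1 le_rfl (by omega), ?_⟩
        rw [hQ']
        exact ⟨_, hmemQ 1 le_rfl (by omega), hσ1⟩
      · refine ⟨hmemQ 2 (by omega) (by omega), ?_⟩
        rw [hQ']
        exact ⟨_, hmemQ 2 (by omega) (by omega), hσ2⟩
  · intro p q hp hq hpq
    rcases key p hp with h | h <;> rcases key q hq with h' | h' <;> subst h <;> subst h'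
    · exact absurd rfl hpq
    · exact ⟨rfl, rfl⟩
    · exact ⟨Set.pair_comm _ _, dist_comm _ _⟩
    · exact absurd rfl hpq
end
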